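/- arXiv:2008.00594 — 2 statements merged into one kernel-verified Lean document; each statement's English description precedes it below -/
import Mathlib

section
/- Fix a natural number m ≥ 1. Then the sequence a_N := 1 - Σ_{k=0}^{m} (-1)^k · C(m,k) · (1 - k/N)^(N-1), defined for natural numbers N > m, converges to 1 - (1 - e^{-1})^m as N → ∞, where C(m,k) is the binomial coefficient and e is Euler's number. -/
open Filter Topology Finset

theorem Real.tendsto_one_add_div_pow_sub_one_exp (x : ℝ) :
    Tendsto (fun N : ℕ => (1 + x / N) ^ (N - 1)) atTop (𝓝 (exp x)) := by
  have hbase : Tendsto (fun N : ℕ => 1 + x / N) atTop (𝓝 1) := by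
    simpa using tendsto_const_nhds.add (tendsto_const_div_atTop_nhds_zero_nat x)
  have hquot := (tendsto_one_add_div_pow_exp x).div hbase one_ne_zero
  rw [div_one] at hquot
  refine hquot.congr' ?_
  filter_upwards [hbase.eventually_ne one_ne_zero, eventually_ge_atTop 1] with N hne hN
  rw [Pi.div_apply, div_eq_iff hne, ← pow_succ, Nat.sub_add_cancel hN]

theorem sum_neg_one_pow_mul_choose_mul_pow {R : Type*} [CommRing R] (a : R) (m : ℕ) :
    ∑ k ∈ range (m + 1), (-1 : R) ^ k * m.choose k * a ^ k = (1 - a) ^ m := by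
  rw [sub_eq_neg_add, add_pow]
  refine sum_congr rfl fun k _ => ?_
  rw [one_pow, mul_one, neg_pow]
  ring

theorem tendsto_inclusion_exclusion_sum_general (m : ℕ) :
    Tendsto (fun N : ℕ =>
        1 - ∑ k ∈ Finset.range (m + 1),
          (-1 : ℝ) ^ k * (m.choose k) * (1 - (k : ℝ) / N) ^ (N - 1))
      atTop (nhds (1 - (1 - (Real.exp 1)⁻¹) ^ m)) := by
  have hterm (k : ℕ) :
      Tendsto (fun N : ℕ => (1 - (k : ℝ) / N) ^ (N - 1)) atTop (𝓝 ((Real.exp 1)⁻¹ ^ k)) := by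
    have := Real.tendsto_one_add_div_pow_sub_one_exp (-k)
    simp_rw [neg_div, ← sub_eq_add_neg, Real.exp_neg, ← Real.exp_one_pow] at this
    rwa [inv_pow]
  rw [← sum_neg_one_pow_mul_choose_mul_pow]
  exact tendsto_const_nhds.sub <| tendsto_finsetSum _ fun k _ => tendsto_const_nhds.mul (hterm k)

theorem tendsto_inclusion_exclusion_sum (m : ℕ) (hm : 1 ≤ m) :
    Tendsto (fun N : ℕ =>
        1 - ∑ k ∈ Finset.range (m + 1),
          (-1 : ℝ) ^ k * (m.choose k) * (1 - (k : ℝ) / N) ^ (N - 1))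
      atTop (nhds (1 - (1 - (Real.exp 1)⁻¹) ^ m)) :=
  tendsto_inclusion_exclusion_sum_general m
end

section
/- Let m and N be natural numbers with 1 ≤ m and N ≥ m + 1, and let ξ be a real number with ξ ≥ m. Then the m-fold iterated integral over the cube [0, 1/ξ]^m of the function (μ_1, …, μ_m) ↦ (1 - μ_1 - ⋯ - μ_m)^(N-m-1) with respect to Lebesgue measure equals (1 / ((N-m)(N-m+1)⋯(N-1))) · Σ_{k=0}^{m} (-1)^k · C(m,k) · (1 - k/ξ)^(N-1), where C(m,k) is the binomial coefficient. -/
/-!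
Integrating out one coordinate at a time: since
`∫₀ᵃ (c - k a - t) ^ q dt = ((c - k a) ^ (q + 1) - (c - (k + 1) a) ^ (q + 1)) / (q + 1)`,
each integration turns the alternating binomial sum of dimension `m` into that of dimension
`m + 1` by Pascal's rule. Induction on the dimension, for an arbitrary constant `c`, gives the
integral of `(c - ∑ μᵢ) ^ p` over `[0, a]ᵐ`; the theorem is the case `c = 1`, `a = 1 / ξ`,
`p = N - m - 1`.
-/

open MeasureTheory Finset

theorem sum_range_succ_alternating_choose_mul {R : Type*} [CommRing R] (n : ℕ) (A : ℕ → R) :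
    ∑ k ∈ range (n + 2), (-1 : R) ^ k * ((n + 1).choose k) * A k =
      ∑ k ∈ range (n + 1), (-1 : R) ^ k * (n.choose k) * (A k - A (k + 1)) := by
  calc ∑ k ∈ range (n + 2), (-1 : R) ^ k * ((n + 1).choose k) * A k
      = ∑ k ∈ range (n + 2), ((n + 1).choose k : R) * ((-1) ^ k * A k) :=
        sum_congr rfl fun k _ => by ring
    _ = ∑ k ∈ range (n + 1), (n.choose k : R) * ((-1) ^ k * A k) +
          ∑ k ∈ range (n + 1), (n.choose k : R) * ((-1) ^ (k + 1) * A (k + 1)) :=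
        sum_choose_succ_mul (fun i _ => (-1 : R) ^ i * A i) n
    _ = _ := by
        rw [← sum_add_distrib]
        exact sum_congr rfl fun k _ => by ring

theorem integral_pi_fin_succ {α E : Type*} [MeasurableSpace α] [NormedAddCommGroup E]
    [NormedSpace ℝ E] (ν : Measure α) [SigmaFinite ν] {n : ℕ} {g : (Fin (n + 1) → α) → E}
    (hg : Integrable g (Measure.pi fun _ => ν)) :
    ∫ x, g x ∂(Measure.pi fun _ => ν) =
      ∫ t, ∫ y, g (Fin.cons t y) ∂(Measure.pi fun _ => ν) ∂ν := by
  have e := (measurePreserving_piFinSuccAbove (fun _ : Fin (n + 1) => ν) 0).symm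
  rw [← e.integrable_comp_emb (MeasurableEquiv.measurableEmbedding _)] at hg
  rw [← e.integral_comp']
  refine (integral_prod _ hg).trans ?_
  simp_rw [Function.comp_apply, MeasurableEquiv.piFinSuccAbove_symm_apply, Fin.insertNthEquiv,
    Equiv.coe_fn_mk, Fin.insertNth_zero, cast_eq]

theorem intervalIntegral.integral_sub_pow (d a : ℝ) (q : ℕ) :
    ∫ t in (0 : ℝ)..a, (d - t) ^ q = (d ^ (q + 1) - (d - a) ^ (q + 1)) / (q + 1) := by
  rw [intervalIntegral.integral_comp_sub_left (· ^ q) d, integral_pow, sub_zero]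

theorem integral_alternating_choose_sum_sub_pow (m q : ℕ) (a c : ℝ) :
    ∫ t in (0 : ℝ)..a, ∑ k ∈ range (m + 1), (-1 : ℝ) ^ k * m.choose k * (c - t - k * a) ^ q =
      (∑ k ∈ range (m + 2), (-1 : ℝ) ^ k * (m + 1).choose k * (c - k * a) ^ (q + 1)) /
        (q + 1) := by
  have reorder : ∀ t k : ℝ, c - t - k * a = c - k * a - t := fun _ _ => sub_right_comm ..
  simp_rw [reorder]
  rw [intervalIntegral.integral_finsetSum fun k _ =>
    (by fun_prop : Continuous _).intervalIntegrable _ _]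
  simp_rw [intervalIntegral.integral_const_mul, intervalIntegral.integral_sub_pow,
    sum_range_succ_alternating_choose_mul, sum_div]
  refine sum_congr rfl fun k _ => ?_
  push_cast
  ring

theorem setIntegral_Icc_pi_sub_sum_pow (p : ℕ) {a : ℝ} (ha : 0 ≤ a) (m : ℕ) (c : ℝ) :
    ∫ μ : Fin m → ℝ in Set.univ.pi fun _ => Set.Icc 0 a, (c - ∑ i, μ i) ^ p =
      (1 / ∏ j ∈ range m, ((p : ℝ) + 1 + j)) *
        ∑ k ∈ range (m + 1), (-1 : ℝ) ^ k * m.choose k * (c - k * a) ^ (p + m) := by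
  induction m generalizing c with
  | zero => simp [Measure.real]
  | succ m ih =>
    have fubini :
        ∫ μ : Fin (m + 1) → ℝ in Set.univ.pi fun _ => Set.Icc 0 a, (c - ∑ i, μ i) ^ p =
          ∫ t in Set.Icc 0 a, ∫ y : Fin m → ℝ in Set.univ.pi fun _ => Set.Icc 0 a,
            (c - t - ∑ i, y i) ^ p := by
      rw [volume_pi, volume_pi, Measure.restrict_pi_pi, Measure.restrict_pi_pi,
        integral_pi_fin_succ]
      · simp_rw [Fin.sum_cons, sub_add_eq_sub_sub]
      · rw [← Measure.restrict_pi_pi]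
        exact ContinuousOn.integrableOn_compact (isCompact_univ_pi fun _ => isCompact_Icc)
          (by fun_prop)
    rw [fubini]
    simp_rw [ih]
    rw [integral_Icc_eq_integral_Ioc, ← intervalIntegral.integral_of_le ha,
      intervalIntegral.integral_const_mul, integral_alternating_choose_sum_sub_pow,
      prod_range_succ, show m + 1 + 1 = m + 2 from rfl, show p + (m + 1) = p + m + 1 from rfl,
      show ((p + m : ℕ) : ℝ) + 1 = p + 1 + m by push_cast; ring]
    simp only [mul_inv, div_eq_mul_inv]
    ring

theorem cube_integral_inclusion_exclusion (m N : ℕ) (hm : 1 ≤ m) (hN : m + 1 ≤ N)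
    (ξ : ℝ) (hξ : (m : ℝ) ≤ ξ) :
    (∫ μ : Fin m → ℝ in Set.univ.pi (fun _ => Set.Icc (0 : ℝ) (1 / ξ)),
        (1 - ∑ i, μ i) ^ (N - m - 1)) =
      (1 / ∏ j ∈ Finset.range m, ((N : ℝ) - m + j)) *
        ∑ k ∈ Finset.range (m + 1),
          (-1 : ℝ) ^ k * (m.choose k) * (1 - (k : ℝ) / ξ) ^ (N - 1) := by
  have hξ_pos : 0 < ξ := zero_lt_one.trans_le ((Nat.one_le_cast.mpr hm).trans hξ)
  obtain ⟨p, rfl⟩ : ∃ p, N = p + m + 1 := ⟨N - m - 1, by omega⟩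
  rw [show p + m + 1 - m - 1 = p by omega, show p + m + 1 - 1 = p + m by omega,
    setIntegral_Icc_pi_sub_sum_pow p (one_div_nonneg.mpr hξ_pos.le) m 1]
  simp_rw [mul_one_div, show ∀ j : ℝ, ((p + m + 1 : ℕ) : ℝ) - m + j = p + 1 + j from
    fun j => by push_cast; ring]
end
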